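/- Let O ⊆ ℝ^M be a bounded open set, g : ℝ → (-∞, ∞] a lower semicontinuous convex function, and (v_n) a sequence in L¹(O) with v_n ⇀ v weakly in L¹(O), g(v_n) ∈ L¹(O) for each n, and g(v_n) ⇀ ḡ weakly in L¹(O). Then g(v) ≤ ḡ almost everywhere on O, g(v) ∈ L¹(O), and ∫_O g(v) dy ≤ liminf_{n→∞} ∫_O g(v_n) dy. -/

import Mathlib

/-!
A convex `g : ℝ → ℝ` is continuous and is the supremum of its (right-derivative) tangent lines
at rational points. Tested against indicators, weak convergence in `L¹` preserves a.e.
inequalities, so each `ℓ_q (v_n) ≤ g (v_n)` passes to `ℓ_q (v) ≤ ḡ`; the countable supremum gives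
`g (v) ≤ ḡ` a.e. Then `g (v)` is integrable, squeezed between a tangent line of `v` and `ḡ`, and
testing against `1` gives `∫ g (v) ≤ ∫ ḡ = lim ∫ g (v_n)`.
-/

open MeasureTheory Filter Set Topology

namespace ConvexOn

variable {S : Set ℝ} {f : ℝ → ℝ}

theorem add_rightDeriv_mul_sub_le (hf : ConvexOn ℝ S f) {q x : ℝ} (hq : q ∈ interior S)
    (hx : x ∈ S) : f q + derivWithin f (Ioi q) q * (x - q) ≤ f x := by
  rcases lt_trichotomy x q with hxq | rfl | hqx
  · have hslope : slope f x q ≤ derivWithin f (Ioi q) q :=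
      (hf.slope_le_leftDeriv_of_mem_interior hx hq hxq).trans
        (hf.leftDeriv_le_rightDeriv_of_mem_interior hq)
    rw [slope_def_field, div_le_iff₀ (by linarith)] at hslope
    linarith
  · simp
  · have hslope := hf.rightDeriv_le_slope_of_mem_interior hq hx hqx
    rw [slope_def_field, le_div_iff₀ (by linarith)] at hslope
    linarith

theorem le_of_forall_rat_add_rightDeriv_mul_sub_le (hf : ConvexOn ℝ univ f) {t y : ℝ}
    (h : ∀ q : ℚ, f q + derivWithin f (Ioi (q : ℝ)) q * (t - q) ≤ y) : f t ≤ y := by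
  -- Approach `t` from the right: on `(t, t + 1)` the slopes are bounded by the one at `t + 1`.
  set c := derivWithin f (Ioi (t + 1)) (t + 1)
  by_contra! hyt
  have hcont : Continuous fun s => f s - c * (s - t) := by
    have := hf.locallyLipschitz.continuous
    fun_prop
  obtain ⟨δ, hδ, hball⟩ := Metric.eventually_nhds_iff.1
    ((hcont.tendsto t).eventually (lt_mem_nhds (by simpa using hyt)))
  obtain ⟨q, htq, hqt⟩ := exists_rat_btwn (lt_add_of_pos_right t (lt_min hδ one_pos))
  have hcq : derivWithin f (Ioi (q : ℝ)) q ≤ c :=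
    hf.monotoneOn_rightDeriv (by simp) (by simp) (by linarith [min_le_right δ 1])
  have hq := hball (show dist (q : ℝ) t < δ by
    rw [Real.dist_eq, abs_of_pos (by linarith)]; linarith [min_le_left δ 1])
  linarith [h q, mul_le_mul_of_nonneg_right hcq (sub_nonneg.2 htq.le)]

end ConvexOn

variable {α : Type*} [MeasurableSpace α] {μ : Measure α}

def TendstoWeakL1 (μ : Measure α) (u : ℕ → α → ℝ) (ulim : α → ℝ) : Prop :=
  ∀ φ : α → ℝ, Measurable φ → (∃ C, ∀ x, |φ x| ≤ C) →
    Tendsto (fun n => ∫ x, u n x * φ x ∂μ) atTop (𝓝 (∫ x, ulim x * φ x ∂μ))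

namespace TendstoWeakL1

variable {u w : ℕ → α → ℝ} {ulim wlim : α → ℝ}

theorem tendsto_setIntegral (hu : TendstoWeakL1 μ u ulim) {s : Set α} (hs : MeasurableSet s) :
    Tendsto (fun n => ∫ x in s, u n x ∂μ) atTop (𝓝 (∫ x in s, ulim x ∂μ)) := by
  have hφ : ∀ f : α → ℝ, (∫ x, f x * s.indicator 1 x ∂μ) = ∫ x in s, f x ∂μ := fun f => by
    simp_rw [← integral_indicator hs]
    congr 1; ext x; by_cases hx : x ∈ s <;> simp [hx]
  simpa only [hφ] using hu (s.indicator 1) (measurable_one.indicator hs)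
    ⟨1, fun x => by by_cases hx : x ∈ s <;> simp [hx]⟩

theorem ae_le (hu : TendstoWeakL1 μ u ulim) (hw : TendstoWeakL1 μ w wlim)
    (hu_int : ∀ n, Integrable (u n) μ) (hw_int : ∀ n, Integrable (w n) μ)
    (hulim : Integrable ulim μ) (hwlim : Integrable wlim μ) (hle : ∀ n, u n ≤ᵐ[μ] w n) :
    ulim ≤ᵐ[μ] wlim :=
  ae_le_of_forall_setIntegral_le hulim hwlim fun _ hs _ =>
    le_of_tendsto_of_tendsto' (hu.tendsto_setIntegral hs) (hw.tendsto_setIntegral hs) fun n =>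
      setIntegral_mono_ae (hu_int n).integrableOn (hw_int n).integrableOn (hle n)

theorem const_mul_add_const [IsFiniteMeasure μ] (hu : TendstoWeakL1 μ u ulim)
    (hu_int : ∀ n, Integrable (u n) μ) (hulim : Integrable ulim μ) (a b : ℝ) :
    TendstoWeakL1 μ (fun n x => a * u n x + b) (fun x => a * ulim x + b) := by
  intro φ hφ ⟨C, hC⟩
  have hφint : Integrable φ μ :=
    Integrable.of_bound hφ.aestronglyMeasurable C (ae_of_all _ fun x => by simpa using hC x)
  have hsplit : ∀ f : α → ℝ, Integrable f μ →
      (∫ x, (a * f x + b) * φ x ∂μ) = a * (∫ x, f x * φ x ∂μ) + b * ∫ x, φ x ∂μ := by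
    intro f hf
    have hfφ : Integrable (fun x => f x * φ x) μ :=
      hf.mul_bdd hφ.aestronglyMeasurable (ae_of_all _ fun x => by simpa using hC x)
    simp_rw [add_mul, mul_assoc]
    rw [integral_add (hfφ.const_mul a) (hφint.const_mul b), integral_const_mul, integral_const_mul]
  simp_rw [hsplit _ (hu_int _), hsplit _ hulim]
  exact ((hu φ hφ ⟨C, hC⟩).const_mul a).add_const _

end TendstoWeakL1

theorem stmt0_general
    (M : ℕ) (O : Set (EuclideanSpace ℝ (Fin M)))
    (hOb : Bornology.IsBounded O)
    (g : ℝ → ℝ) (hgc : ConvexOn ℝ Set.univ g)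
    (v : ℕ → EuclideanSpace ℝ (Fin M) → ℝ) (vlim gbar : EuclideanSpace ℝ (Fin M) → ℝ)
    (hvint : ∀ n, IntegrableOn (v n) O)
    (hvlimint : IntegrableOn vlim O)
    (hgbarint : IntegrableOn gbar O)
    (hgvint : ∀ n, IntegrableOn (fun x => g (v n x)) O)
    (hweakv : ∀ φ : EuclideanSpace ℝ (Fin M) → ℝ, Measurable φ → (∃ C, ∀ x, |φ x| ≤ C) →
      Tendsto (fun n => ∫ x in O, v n x * φ x) atTop (𝓝 (∫ x in O, vlim x * φ x)))
    (hweakg : ∀ φ : EuclideanSpace ℝ (Fin M) → ℝ, Measurable φ → (∃ C, ∀ x, |φ x| ≤ C) →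
      Tendsto (fun n => ∫ x in O, g (v n x) * φ x) atTop (𝓝 (∫ x in O, gbar x * φ x))) :
    (∀ᵐ x ∂(volume.restrict O), g (vlim x) ≤ gbar x) ∧
      IntegrableOn (fun x => g (vlim x)) O ∧
      (∫ x in O, g (vlim x)) ≤ liminf (fun n => ∫ x in O, g (v n x)) atTop := by
  have : IsFiniteMeasure (volume.restrict O) :=
    isFiniteMeasure_restrict.2 hOb.measure_lt_top.ne
  set g' := fun q => derivWithin g (Ioi q) q
  have htangent (q t : ℝ) : g' q * t + (g q - g' q * q) ≤ g t := by
    linarith [hgc.add_rightDeriv_mul_sub_le (q := q) (x := t) (by simp) (mem_univ t)]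
  have hle : ∀ᵐ x ∂(volume.restrict O), g (vlim x) ≤ gbar x := by
    have hrat (q : ℚ) : ∀ᵐ x ∂(volume.restrict O), g' q * vlim x + (g q - g' q * q) ≤ gbar x :=
      (TendstoWeakL1.const_mul_add_const hweakv hvint hvlimint _ _).ae_le hweakg
        (fun n => ((hvint n).const_mul _).add (integrable_const _)) hgvint
        ((hvlimint.const_mul _).add (integrable_const _)) hgbarint
        fun n => ae_of_all _ fun x => htangent q (v n x)
    filter_upwards [ae_all_iff.2 hrat] with x hx
    exact hgc.le_of_forall_rat_add_rightDeriv_mul_sub_le fun q => by linarith [hx q]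
  have hint : IntegrableOn (fun x => g (vlim x)) O :=
    integrable_of_le_of_le
      (hgc.locallyLipschitz.continuous.comp_aestronglyMeasurable hvlimint.aestronglyMeasurable)
      (ae_of_all _ fun x => htangent 0 (vlim x)) hle
      ((hvlimint.const_mul _).add (integrable_const _)) hgbarint
  refine ⟨hle, hint, ?_⟩
  have hmass := hweakg 1 measurable_const ⟨1, fun _ => by simp⟩
  simp only [Pi.one_apply, mul_one] at hmass
  rw [hmass.liminf_eq]
  exact integral_mono_ae hint hgbarint hle

/-- weak lower semicontinuity of convex integrands under weak L¹
convergence. -/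
theorem stmt0
    (M : ℕ) (O : Set (EuclideanSpace ℝ (Fin M)))
    (hO : IsOpen O) (hOb : Bornology.IsBounded O)
    (g : ℝ → ℝ) (hgc : ConvexOn ℝ Set.univ g) (hglsc : LowerSemicontinuous g)
    (v : ℕ → EuclideanSpace ℝ (Fin M) → ℝ) (vlim gbar : EuclideanSpace ℝ (Fin M) → ℝ)
    (hvint : ∀ n, IntegrableOn (v n) O)
    (hvlimint : IntegrableOn vlim O)
    (hgbarint : IntegrableOn gbar O)
    (hgvint : ∀ n, IntegrableOn (fun x => g (v n x)) O)
    (hweakv : ∀ φ : EuclideanSpace ℝ (Fin M) → ℝ, Measurable φ → (∃ C, ∀ x, |φ x| ≤ C) →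
      Tendsto (fun n => ∫ x in O, v n x * φ x) atTop (𝓝 (∫ x in O, vlim x * φ x)))
    (hweakg : ∀ φ : EuclideanSpace ℝ (Fin M) → ℝ, Measurable φ → (∃ C, ∀ x, |φ x| ≤ C) →
      Tendsto (fun n => ∫ x in O, g (v n x) * φ x) atTop (𝓝 (∫ x in O, gbar x * φ x))) :
    (∀ᵐ x ∂(volume.restrict O), g (vlim x) ≤ gbar x) ∧
      IntegrableOn (fun x => g (vlim x)) O ∧
      (∫ x in O, g (vlim x)) ≤ liminf (fun n => ∫ x in O, g (v n x)) atTop :=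
  stmt0_general M O hOb g hgc v vlim gbar hvint hvlimint hgbarint hgvint hweakv hweakg
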